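/- Let Δ be the unit equilateral triangle in ℝ² with vertices (0,0), (1,0), (1/2, √3/2). The Minkowski sum (1/2)•Δ + (1/2)•(−Δ) (a regular hexagon) can hide behind Δ, and its area equals (3/2) · area(Δ) = 3√3/8. -/

import Mathlib

open scoped Pointwise
open MeasureTheory

/-- Orthogonal projection of a point onto the hyperplane `u^⊥`. -/
noncomputable def proj {n : ℕ} (u x : EuclideanSpace ℝ (Fin n)) : EuclideanSpace ℝ (Fin n) :=
  (Submodule.orthogonalProjectionOnto (ℝ ∙ u)ᗮ x : EuclideanSpace ℝ (Fin n))

/-- `A` can hide behind `B`: for every unit direction `u` there is a translation vector in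
`u^⊥` moving the shadow of `A` inside the shadow of `B`. -/
def HidesBehind {n : ℕ} (A B : Set (EuclideanSpace ℝ (Fin n))) : Prop :=
  ∀ u : EuclideanSpace ℝ (Fin n), ‖u‖ = 1 →
    ∃ v ∈ (ℝ ∙ u)ᗮ, v +ᵥ (proj u '' A) ⊆ proj u '' B

/-- The unit equilateral triangle in `ℝ²`. -/
noncomputable def Δ : Set (EuclideanSpace ℝ (Fin 2)) :=
  convexHull ℝ {!₂[0, 0], !₂[1, 0], !₂[1/2, Real.sqrt 3 / 2]}

/-!
In the plane every shadow is a segment. If `B` is compact and convex, the shadow of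
`½B + ½(-B)` in any direction is a segment centred at the origin of exactly the same length as
the shadow of `B`, so a translation along the shadow line moves one onto the other.

For the area, `Δ` is the image of the triangle `S = conv {0, e₁, e₂}` under a linear map of
determinant `√3 / 2`, and `S + (-S)` is the hexagon `|x|, |y|, |x + y| ≤ 1` of area `3`
(for `⊇`, write a point of the hexagon as `p⁺ - p⁻` coordinatewise), so the area is
`(√3 / 2) · (1 / 4) · 3`.
-/

open Module Set

section Hiding

variable {E : Type*}

theorem exists_add_mem_image_of_mem_half_smul_add_half_smul_neg [AddCommGroup E] [Module ℝ E]
    [TopologicalSpace E] {B : Set E} (hB : Convex ℝ B) (hBc : IsCompact B) (f : E →L[ℝ] ℝ) :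
    ∃ c : ℝ, ∀ x ∈ (1/2 : ℝ) • B + (1/2 : ℝ) • (-B), c + f x ∈ f '' B := by
  rcases B.eq_empty_or_nonempty with rfl | hne
  · exact ⟨0, by simp⟩
  obtain ⟨a, ha, hmin⟩ := hBc.exists_isMinOn hne f.continuous.continuousOn
  obtain ⟨b, hb, hmax⟩ := hBc.exists_isMaxOn hne f.continuous.continuousOn
  have hI : (f '' B).OrdConnected := convex_iff_ordConnected.1 (hB.linear_image f.toLinearMap)
  refine ⟨(f a + f b) / 2, ?_⟩
  rintro _ ⟨_, ⟨p, hp, rfl⟩, _, ⟨q, hq, rfl⟩, rfl⟩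
  rw [mem_neg] at hq
  refine hI.out (mem_image_of_mem f ha) (mem_image_of_mem f hb) ⟨?_, ?_⟩ <;>
  · simp only [map_add, map_smul, smul_eq_mul]
    linarith [isMinOn_iff.1 hmin p hp, isMaxOn_iff.1 hmax p hp, isMinOn_iff.1 hmin _ hq,
      isMaxOn_iff.1 hmax _ hq, map_neg f q]

theorem Submodule.exists_vadd_starProjection_image_subset [NormedAddCommGroup E]
    [InnerProductSpace ℝ E] {K : Submodule ℝ E} [K.HasOrthogonalProjection] (hK : finrank ℝ K = 1)
    {B : Set E} (hB : Convex ℝ B) (hBc : IsCompact B) :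
    ∃ v ∈ K, v +ᵥ K.starProjection '' ((1/2 : ℝ) • B + (1/2 : ℝ) • (-B)) ⊆
      K.starProjection '' B := by
  obtain ⟨w, hwK, hw⟩ := K.exists_mem_ne_zero_of_ne_bot (by rintro rfl; simp at hK)
  obtain rfl := eq_span_singleton_of_mem_of_finrank_eq_one hK hwK hw
  obtain ⟨c, hc⟩ := exists_add_mem_image_of_mem_half_smul_add_half_smul_neg hB hBc (innerSL ℝ w)
  refine ⟨(c / ‖w‖ ^ 2) • w, Submodule.smul_mem _ _ hwK, ?_⟩
  rintro _ ⟨_, ⟨x, hx, rfl⟩, rfl⟩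
  obtain ⟨z, hz, hzx⟩ := hc x hx
  refine ⟨z, hz, ?_⟩
  simp only [innerSL_apply_apply] at hzx
  simp only [starProjection_singleton, hzx, vadd_eq_add, ← add_smul, RCLike.ofReal_real_eq_id, id,
    add_div]

theorem hidesBehind_half_smul_add_half_smul_neg {B : Set (EuclideanSpace ℝ (Fin 2))}
    (hB : Convex ℝ B) (hBc : IsCompact B) :
    HidesBehind ((1/2 : ℝ) • B + (1/2 : ℝ) • (-B)) B := by
  intro u hu
  have : Fact (finrank ℝ (EuclideanSpace ℝ (Fin 2)) = 1 + 1) := ⟨finrank_euclideanSpace_fin⟩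
  exact Submodule.exists_vadd_starProjection_image_subset
    (Submodule.finrank_orthogonal_span_singleton (norm_ne_zero_iff.1 (by simp [hu]))) hB hBc

end Hiding

section Area

local notation "ℝ²" => EuclideanSpace ℝ (Fin 2)

theorem posPart_add_posPart_le_one {a b : ℝ} (ha : a ≤ 1) (hb : b ≤ 1) (hab : a + b ≤ 1) :
    a⁺ + b⁺ ≤ 1 := by
  rcases max_cases a 0 with ⟨h, -⟩ | ⟨h, -⟩ <;> rcases max_cases b 0 with ⟨h', -⟩ | ⟨h', -⟩ <;>
  · rw [posPart_def, posPart_def, h, h']; linarith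

def stdTriangle : Set ℝ² := {p | 0 ≤ p 0 ∧ 0 ≤ p 1 ∧ p 0 + p 1 ≤ 1}

def stdHexagon : Set ℝ² := {p | |p 0| ≤ 1 ∧ |p 1| ≤ 1 ∧ |p 0 + p 1| ≤ 1}

theorem convex_stdTriangle : Convex ℝ stdTriangle := by
  rintro x ⟨hx₀, hx₁, hx⟩ y ⟨hy₀, hy₁, hy⟩ a b ha hb hab
  simp only [stdTriangle, mem_ofPred_eq, PiLp.add_apply, PiLp.smul_apply, smul_eq_mul]
  refine ⟨by positivity, by positivity, ?_⟩
  nlinarith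

theorem convexHull_eq_stdTriangle :
    convexHull ℝ {!₂[0, 0], !₂[1, 0], !₂[0, 1]} = stdTriangle := by
  refine subset_antisymm (convexHull_min ?_ convex_stdTriangle) fun p ⟨hp₀, hp₁, hp⟩ ↦ ?_
  · rintro _ (rfl | rfl | rfl) <;> norm_num [stdTriangle]
  have := (convex_convexHull ℝ {!₂[0, 0], !₂[1, 0], !₂[(0 : ℝ), 1]}).sum_mem
    (t := Finset.univ) (w := ![1 - p 0 - p 1, p 0, p 1]) (z := ![!₂[0, 0], !₂[1, 0], !₂[0, 1]])
    (fun i _ ↦ by fin_cases i <;> simp <;> linarith) (by simp [Fin.sum_univ_three]; ring)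
    (fun i _ ↦ subset_convexHull ℝ _ (by fin_cases i <;> simp))
  convert this
  ext i; fin_cases i <;> simp [Fin.sum_univ_three]

theorem stdTriangle_add_neg : stdTriangle + -stdTriangle = stdHexagon := by
  refine subset_antisymm ?_ fun p ⟨h₀, h₁, h⟩ ↦ ?_
  · rintro _ ⟨x, ⟨hx₀, hx₁, hx⟩, y, ⟨hy₀, hy₁, hy⟩, rfl⟩
    simp only [PiLp.neg_apply] at hy₀ hy₁ hy
    simp only [stdHexagon, mem_ofPred_eq, PiLp.add_apply, abs_le]
    refine ⟨⟨?_, ?_⟩, ⟨?_, ?_⟩, ⟨?_, ?_⟩⟩ <;> linarith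
  rw [abs_le] at h₀ h₁ h
  refine ⟨!₂[(p 0)⁺, (p 1)⁺], ?_, -!₂[(p 0)⁻, (p 1)⁻], ?_, ?_⟩
  · exact ⟨by simp, by simp, by simpa using posPart_add_posPart_le_one h₀.2 h₁.2 h.2⟩
  · refine ⟨by simp, by simp, ?_⟩
    simpa [← posPart_neg] using
      posPart_add_posPart_le_one (by linarith) (by linarith) (by linarith)
  · ext i; fin_cases i <;> simp [posPart_sub_negPart, ← sub_eq_add_neg]

theorem integral_Icc_two_sub_abs : ∫ a in Icc (-1 : ℝ) 1, (2 - |a|) = 3 := by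
  have hc : Continuous fun a : ℝ ↦ 2 - |a| := by fun_prop
  rw [integral_Icc_eq_integral_Ioc, ← intervalIntegral.integral_of_le (by norm_num),
    ← intervalIntegral.integral_add_adjacent_intervals (b := 0) (hc.intervalIntegrable _ _)
      (hc.intervalIntegrable _ _),
    intervalIntegral.integral_congr (g := fun a ↦ 2 + a) fun a ha ↦ ?_,
    intervalIntegral.integral_congr (a := 0) (g := fun a ↦ 2 - a) fun a ha ↦ ?_]
  · rw [intervalIntegral.integral_comp_add_left (fun x ↦ x),
      intervalIntegral.integral_comp_sub_left (fun x ↦ x)]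
    norm_num [integral_id]
  · rw [uIcc_of_le (by norm_num)] at ha
    simp [abs_of_nonneg ha.1]
  · rw [uIcc_of_le (by norm_num)] at ha
    simp [abs_of_nonpos ha.2]

theorem volume_setOf_abs_le_one_and_abs_add_le_one (a : ℝ) :
    volume {b : ℝ | |b| ≤ 1 ∧ |a + b| ≤ 1} = ENNReal.ofReal (2 - |a|) := by
  have : {b : ℝ | |b| ≤ 1 ∧ |a + b| ≤ 1} = Icc (max (-1) (-1 - a)) (min 1 (1 - a)) := by
    ext b
    simp only [mem_ofPred_eq, mem_Icc, abs_le, max_le_iff, le_min_iff]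
    constructor <;> intro h <;> refine ⟨⟨?_, ?_⟩, ?_, ?_⟩ <;> linarith
  rw [this, Real.volume_Icc]
  congr 1
  rcases le_total 0 a with ha | ha
  · rw [abs_of_nonneg ha, max_eq_left (by linarith), min_eq_right (by linarith)]; ring
  · rw [abs_of_nonpos ha, max_eq_right (by linarith), min_eq_left (by linarith)]; ring

theorem volume_setOf_abs_le_one_and_abs_le_one_and_abs_add_le_one :
    volume {q : ℝ × ℝ | |q.1| ≤ 1 ∧ |q.2| ≤ 1 ∧ |q.1 + q.2| ≤ 1} = 3 := by
  have hT : MeasurableSet {q : ℝ × ℝ | |q.1| ≤ 1 ∧ |q.2| ≤ 1 ∧ |q.1 + q.2| ≤ 1} :=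
    measurableSet_setOfPred.2 (by fun_prop)
  have hslice (a : ℝ) :
      volume (Prod.mk a ⁻¹' {q : ℝ × ℝ | |q.1| ≤ 1 ∧ |q.2| ≤ 1 ∧ |q.1 + q.2| ≤ 1}) =
        (Icc (-1) 1).indicator (fun a ↦ ENNReal.ofReal (2 - |a|)) a := by
    by_cases ha : a ∈ Icc (-1) 1
    · simp [indicator_of_mem ha, ← volume_setOf_abs_le_one_and_abs_add_le_one, abs_le.2 ha]
    · simp [← abs_le, abs_le.not.2 ha]
  have hc : Continuous fun a : ℝ ↦ 2 - |a| := by fun_prop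
  have hnn : 0 ≤ᵐ[volume.restrict (Icc (-1 : ℝ) 1)] fun a ↦ 2 - |a| :=
    (ae_restrict_iff' measurableSet_Icc).2 (ae_of_all _ fun a ha ↦ by
      simpa using (abs_le.2 ha).trans one_le_two)
  rw [Measure.volume_eq_prod, Measure.prod_apply hT, funext hslice,
    lintegral_indicator measurableSet_Icc,
    ← ofReal_integral_eq_lintegral_ofReal hc.integrableOn_Icc hnn, integral_Icc_two_sub_abs,
    ENNReal.ofReal_ofNat]

theorem volume_preimage_finTwo {s : Set (ℝ × ℝ)} (hs : MeasurableSet s) :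
    volume {p : ℝ² | (p 0, p 1) ∈ s} = volume s :=
  ((volume_preserving_finTwoArrow ℝ).comp (PiLp.volume_preserving_ofLp (Fin 2))).measure_preimage
    hs.nullMeasurableSet

theorem volume_stdHexagon : volume stdHexagon = 3 :=
  (volume_preimage_finTwo (measurableSet_setOfPred.2 (by fun_prop))).trans
    volume_setOf_abs_le_one_and_abs_le_one_and_abs_add_le_one

noncomputable def triangleMap : ℝ² →ₗ[ℝ] ℝ² := Matrix.toLpLin 2 2 !![1, 1/2; 0, √3/2]

theorem det_triangleMap : LinearMap.det triangleMap = √3 / 2 := by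
  rw [triangleMap, Matrix.toLpLin_eq_toLin, LinearMap.det_toLin, Matrix.det_fin_two_of]
  ring

theorem image_triangleMap_stdTriangle : triangleMap '' stdTriangle = Δ := by
  rw [← convexHull_eq_stdTriangle, LinearMap.image_convexHull, Δ]
  congr 1
  simp only [image_insert_eq, image_singleton]
  congr <;> ext i <;> fin_cases i <;> simp [triangleMap, Matrix.toLpLin_apply]

theorem half_smul_add_half_smul_neg_Δ_eq_image :
    (1/2 : ℝ) • Δ + (1/2 : ℝ) • (-Δ) = triangleMap '' ((1/2 : ℝ) • stdHexagon) := by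
  rw [← image_triangleMap_stdTriangle, ← stdTriangle_add_neg, smul_add, Set.image_add,
    image_smul_set, image_smul_set, Set.image_neg]

theorem volume_half_smul_add_half_smul_neg_Δ :
    volume ((1/2 : ℝ) • Δ + (1/2 : ℝ) • (-Δ)) = ENNReal.ofReal (3 * √3 / 8) := by
  rw [half_smul_add_half_smul_neg_Δ_eq_image, Measure.addHaar_image_linearMap, Measure.addHaar_smul,
    volume_stdHexagon, det_triangleMap, finrank_euclideanSpace_fin, ← ENNReal.ofReal_ofNat 3,
    ← ENNReal.ofReal_mul (by positivity), ← ENNReal.ofReal_mul (by positivity)]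
  congr 1
  rw [abs_of_pos (by positivity)]
  norm_num
  ring

end Area

theorem hexagon_hides_behind_triangle :
    HidesBehind ((1/2 : ℝ) • Δ + (1/2 : ℝ) • (-Δ)) Δ ∧
    volume ((1/2 : ℝ) • Δ + (1/2 : ℝ) • (-Δ)) = ENNReal.ofReal (3 * Real.sqrt 3 / 8) ∧
    (3 * Real.sqrt 3 / 8 : ℝ) = 3 / 2 * (Real.sqrt 3 / 4) := by
  refine ⟨hidesBehind_half_smul_add_half_smul_neg (convex_convexHull ℝ _)
    ((toFinite _).isCompact_convexHull ℝ), volume_half_smul_add_half_smul_neg_Δ, by ring⟩
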